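/- arXiv:2307.02418 — 2 statements merged into one kernel-verified Lean document; each statement's English description precedes it below -/
import Mathlib

section
/- Let {σ_λ : λ ∈ Λ} be a basis of the free ℚ[q]-module on Λ related to {τ_λ} by τ_λ = σ_λ + Σ_{|μ|+2n=|λ|} a_μ(λ) q σ_μ with all a_μ(λ) ∈ ℚ, and suppose the Pieri-operator coefficients of σ_{(1,1)} ⋆ σ_μ in the σ-basis are polynomials in q with nonnegative coefficients for all μ ∈ Λ (Condition (**)). Then for λ = (n+1+j, n−1−j), 0 ≤ j ≤ n−2, the coefficient a := a_{(0,0)}(λ) satisfies a ≥ 0. -/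
open Polynomial

def Lam (n : ℤ) : Set (ℤ × ℤ) :=
  {p | p.1 ≤ 2*n - 1 ∧ p.2 ≤ p.1 ∧ -1 ≤ p.2 ∧
       (n - 2 < p.1 → p.2 < p.1) ∧ (p.2 = -1 → p.1 = 2*n - 1)}

abbrev M := (ℤ × ℤ) →₀ Polynomial ℚ

noncomputable def tau (l : ℤ × ℤ) : M := Finsupp.single l 1

/-- Pech's quantum Pieri rule for multiplication by τ_(1,1), on basis indices. -/
noncomputable def pieriFun (n : ℤ) : ℤ × ℤ → M := fun p =>
  if p.1 = 2*n - 1 then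
    (if p.2 = 2*n - 3 then (X : Polynomial ℚ) • (tau (2*n-1, -1) + tau (2*n-2, 0))
     else (X : Polynomial ℚ) • tau (p.2 + 1, 0))
  else if p.1 + p.2 = 2*n - 4 ∨ p.1 + p.2 = 2*n - 3 then
    tau (p.1 + 2, p.2) + tau (p.1 + 1, p.2 + 1)
  else tau (p.1 + 1, p.2 + 1)

/-- The Pieri operator: quantum multiplication by τ_(1,1). -/
noncomputable def P (n : ℤ) : M →ₗ[Polynomial ℚ] M :=
  Finsupp.linearCombination (Polynomial ℚ) (pieriFun n)

/-- Λ as a finite set. -/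
noncomputable def LamF (n : ℤ) : Finset (ℤ × ℤ) :=
  ((Finset.Icc (-1) (2*n-1)) ×ˢ (Finset.Icc (-1) (2*n-1))).filter
    (fun p => p.2 ≤ p.1 ∧ (n - 2 < p.1 → p.2 < p.1) ∧ (p.2 = -1 → p.1 = 2*n - 1))

theorem stmt13 (n : ℤ) (hn : 3 ≤ n) (σ : ℤ × ℤ → M) (a : ℤ × ℤ → ℤ × ℤ → ℚ)
    (h : ∀ l ∈ LamF n, tau l = σ l +
      ∑ μ ∈ (LamF n).filter (fun μ => μ.1 + μ.2 + 2*n = l.1 + l.2),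
        (Polynomial.C (a μ l) * X) • σ μ)
    (c : ℤ × ℤ → ℤ × ℤ → Polynomial ℚ)
    (hc : ∀ μ ∈ LamF n, P n (σ μ) = ∑ ν ∈ LamF n, (c μ ν) • σ ν)
    (hpos : ∀ μ ∈ LamF n, ∀ ν ∈ LamF n, ∀ k : ℕ, 0 ≤ (c μ ν).coeff k)
    (hσ : LinearIndependent (Polynomial ℚ) (fun p : (LamF n) => σ p))
    : ∀ j : ℤ, 0 ≤ j → j ≤ n - 2 → 0 ≤ a (0, 0) (n + 1 + j, n - 1 - j) := by
  intro j hj0 hj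
  set l : ℤ × ℤ := (n + 1 + j, n - 1 - j) with hl
  set m : ℤ × ℤ := (n + j, n - 2 - j) with hm
  have memiff : ∀ p : ℤ × ℤ, p ∈ LamF n ↔
      (-1 ≤ p.1 ∧ p.1 ≤ 2*n-1 ∧ -1 ≤ p.2 ∧ p.2 ≤ 2*n-1 ∧ p.2 ≤ p.1 ∧
       (n-2 < p.1 → p.2 < p.1) ∧ (p.2 = -1 → p.1 = 2*n-1)) := by
    intro p
    simp [LamF, Finset.mem_filter, Finset.mem_product, Finset.mem_Icc, and_assoc]
  have hml : l ∈ LamF n := by rw [memiff]; simp [hl]; omega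
  have hmm : m ∈ LamF n := by rw [memiff]; simp [hm]; omega
  have h00 : ((0,0) : ℤ × ℤ) ∈ LamF n := by rw [memiff]; simp; omega
  -- tau m = σ m
  have hfe : (LamF n).filter (fun μ => μ.1 + μ.2 + 2*n = m.1 + m.2) = ∅ := by
    rw [Finset.filter_eq_empty_iff]
    intro ν hν
    rw [memiff] at hν
    simp [hm]
    omega
  have htm : tau m = σ m := by
    have := h m hmm
    rw [hfe] at this
    simpa using this
  -- tau l = σ l + (C a * X) • σ (0,0)
  have hfl : (LamF n).filter (fun μ => μ.1 + μ.2 + 2*n = l.1 + l.2) = {((0,0) : ℤ × ℤ)} := by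
    ext ν
    rw [Finset.mem_filter, memiff, Finset.mem_singleton, Prod.ext_iff]
    simp [hl]
    omega
  have htl : tau l = σ l + (Polynomial.C (a (0,0) l) * X) • σ (0,0) := by
    have := h l hml
    rw [hfl] at this
    simpa using this
  -- P n (tau m) = tau l
  have hPm : P n (tau m) = tau l := by
    rw [tau, P, Finsupp.linearCombination_single, one_smul, pieriFun]
    have h1 : ¬ (m.1 = 2*n-1) := by simp [hm]; omega
    have h2 : ¬ (m.1 + m.2 = 2*n-4 ∨ m.1 + m.2 = 2*n-3) := by simp [hm]; omega
    rw [if_neg h1, if_neg h2]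
    have : (m.1 + 1, m.2 + 1) = l := by
      rw [Prod.ext_iff]; simp [hm, hl]; constructor <;> ring
    rw [this]
  -- the two expressions for P n (σ m)
  have key : ∑ ν ∈ LamF n, (c m ν) • σ ν
      = σ l + (Polynomial.C (a (0,0) l) * X) • σ (0,0) := by
    rw [← hc m hmm, ← htm, hPm, htl]
  set A : Polynomial ℚ := Polynomial.C (a (0,0) l) * X with hA
  set d : ℤ × ℤ → Polynomial ℚ :=
    fun ν => (if ν = l then 1 else 0) + (if ν = (0,0) then A else 0) with hd
  have hsum : ∑ ν ∈ LamF n, d ν • σ ν = σ l + A • σ (0,0) := by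
    simp only [hd, add_smul, Finset.sum_add_distrib, ite_smul, zero_smul, one_smul]
    rw [Finset.sum_ite_eq' (LamF n) l σ, Finset.sum_ite_eq' (LamF n) (0,0) (fun ν => A • σ ν),
      if_pos hml, if_pos h00]
  have hzero : ∑ i : (LamF n), (c m i - d i) • σ i = 0 := by
    rw [Finset.sum_coe_sort (LamF n) (fun ν => (c m ν - d ν) • σ ν)]
    simp only [sub_smul, Finset.sum_sub_distrib, key, hsum, sub_self]
  have hli := Fintype.linearIndependent_iff.mp hσ (fun i => c m i - d i) hzero
  have h0 := hli ⟨(0,0), h00⟩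
  have hne : ((0,0) : ℤ × ℤ) ≠ l := by
    rw [hl]; intro hcon; rw [Prod.ext_iff] at hcon; simp at hcon; omega
  have hc00 : c m (0,0) = A := by
    have := sub_eq_zero.mp h0
    rw [hd] at this
    simpa [hne, show (0 : ℤ × ℤ) ≠ l from hne] using this
  have := hpos m hmm (0,0) h00 1
  rw [hc00, hA] at this
  simpa using this
end

section
/- Under Condition (**), for λ ∈ Λ with |λ| = 2n and λ₁ ≥ n+2, writing τ_λ = σ_λ + a q σ_{(0,0)}, one has a ≤ 0. (Proof: apply the t-fold Pieri operator with t = 2n − λ₁ ≤ n−2 to σ_λ = τ_λ − a q σ_{(0,0)}, obtaining (σ_{(1,1)})^t ⋆ σ_λ = q σ_{(λ₂+t,0)} − a q σ_{(t,t)}, and use nonnegativity of the coefficient of σ_{(t,t)}.) -/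
open Polynomial

lemma P_tau (n : ℤ) (p : ℤ × ℤ) : P n (tau p) = pieriFun n p := by
  simp [P, tau]

lemma mem_LamF (n : ℤ) (p : ℤ × ℤ) : p ∈ LamF n ↔
    (-1 ≤ p.2 ∧ p.2 ≤ p.1 ∧ p.1 ≤ 2*n-1 ∧ (n-2 < p.1 → p.2 < p.1) ∧
      (p.2 = -1 → p.1 = 2*n-1)) := by
  simp only [LamF, Finset.mem_filter, Finset.mem_product, Finset.mem_Icc]
  omega

def NN (p : Polynomial ℚ) : Prop := ∀ k : ℕ, 0 ≤ p.coeff k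

lemma NN_zero : NN 0 := fun k => by simp

lemma NN_one : NN 1 := fun k => by
  rw [Polynomial.coeff_one]; split_ifs <;> norm_num

lemma NN_mul {p q : Polynomial ℚ} (hp : NN p) (hq : NN q) : NN (p * q) := fun k => by
  rw [Polynomial.coeff_mul]
  exact Finset.sum_nonneg fun x _ => mul_nonneg (hp _) (hq _)

lemma NN_sum {ι : Type*} (s : Finset ι) (f : ι → Polynomial ℚ)
    (hf : ∀ i ∈ s, NN (f i)) : NN (∑ i ∈ s, f i) := fun k => by
  rw [Polynomial.finset_sum_coeff]
  exact Finset.sum_nonneg fun i hi => hf i hi k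

lemma lin_ext (n : ℤ) (σ : ℤ × ℤ → M)
    (hσ : LinearIndependent (Polynomial ℚ) (fun p : (LamF n) => σ p))
    (d e : ℤ × ℤ → Polynomial ℚ)
    (hde : ∑ ν ∈ LamF n, d ν • σ ν = ∑ ν ∈ LamF n, e ν • σ ν) :
    ∀ ν ∈ LamF n, d ν = e ν := by
  have h0 : ∑ x ∈ (LamF n).attach, (d x.1 - e x.1) • σ x.1 = 0 := by
    rw [Finset.sum_attach (LamF n) (fun ν => (d ν - e ν) • σ ν)]
    simp only [sub_smul, Finset.sum_sub_distrib, hde, sub_self]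
  intro ν hν
  have := linearIndependent_iff'.mp hσ (LamF n).attach (fun x => d x.1 - e x.1) h0
    ⟨ν, hν⟩ (Finset.mem_attach _ _)
  have := sub_eq_zero.mp this
  exact this

theorem stmt15 (n : ℤ) (hn : 3 ≤ n) (σ : ℤ × ℤ → M) (a : ℤ × ℤ → ℤ × ℤ → ℚ)
    (h : ∀ l ∈ LamF n, tau l = σ l +
      ∑ μ ∈ (LamF n).filter (fun μ => μ.1 + μ.2 + 2*n = l.1 + l.2),
        (Polynomial.C (a μ l) * X) • σ μ)
    (c : ℤ × ℤ → ℤ × ℤ → Polynomial ℚ)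
    (hc : ∀ μ ∈ LamF n, P n (σ μ) = ∑ ν ∈ LamF n, (c μ ν) • σ ν)
    (hpos : ∀ μ ∈ LamF n, ∀ ν ∈ LamF n, ∀ k : ℕ, 0 ≤ (c μ ν).coeff k)
    (hσ : LinearIndependent (Polynomial ℚ) (fun p : (LamF n) => σ p))
    (l : ℤ × ℤ) (hl : l ∈ LamF n) (hdeg : l.1 + l.2 = 2*n) (hl1 : n + 2 ≤ l.1)
    : a (0, 0) l ≤ 0 := by
  have hlmem := (mem_LamF n l).mp hl
  -- basic bounds
  have hl2a : 1 ≤ l.2 := by omega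
  have hl2b : l.2 ≤ n - 2 := by omega
  set a₀ : ℚ := a (0, 0) l with ha₀
  -- the filter for l is {(0,0)}
  have hfl : (LamF n).filter (fun μ => μ.1 + μ.2 + 2*n = l.1 + l.2) = {((0:ℤ),(0:ℤ))} := by
    ext μ
    simp only [Finset.mem_filter, mem_LamF, Finset.mem_singleton, Prod.ext_iff]
    omega
  have h00mem : ((0:ℤ),(0:ℤ)) ∈ LamF n := by rw [mem_LamF]; norm_num; omega
  have htau_l : tau l = σ l + (C a₀ * X) • σ (0, 0) := by
    have := h l hl
    rw [hfl, Finset.sum_singleton] at this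
    exact this
  have htau0 : ∀ p : ℤ × ℤ, p ∈ LamF n → p.1 + p.2 < 2*n → tau p = σ p := by
    intro p hp hps
    have hf : (LamF n).filter (fun μ => μ.1 + μ.2 + 2*n = p.1 + p.2) = ∅ := by
      ext μ
      simp only [Finset.mem_filter, mem_LamF, Finset.notMem_empty, iff_false, not_and]
      omega
    have := h p hp
    rw [hf, Finset.sum_empty, add_zero] at this
    exact this
  have hσl : σ l = tau l - (C a₀ * X) • tau (0, 0) := by
    rw [htau0 (0,0) h00mem (by norm_num; omega), htau_l]
    abel
  -- t := l.2 as a natural number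
  set t : ℕ := l.2.toNat with htdef
  have ht : (t : ℤ) = l.2 := Int.toNat_of_nonneg (by omega)
  -- iterating P on tau l
  have claim1 : ∀ k : ℕ, (k : ℤ) + 1 ≤ l.2 → (P n)^[k] (tau l) = tau (l.1 + k, l.2 + k) := by
    intro k
    induction k with
    | zero => intro _; simp
    | succ k ih =>
      intro hk
      push_cast at hk
      rw [Function.iterate_succ_apply', ih (by omega), P_tau]
      have hk0 : (0:ℤ) ≤ (k:ℤ) := Int.natCast_nonneg k
      show pieriFun n (l.1 + k, l.2 + k) = _
      simp only [pieriFun]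
      rw [if_neg (by first | (dsimp only; omega) | omega), if_neg (by first | (dsimp only; omega) | omega)]
      push_cast
      ring_nf
  obtain ⟨s, hs⟩ : ∃ s, t = s + 1 := ⟨t - 1, by omega⟩
  have hsz : (s : ℤ) = l.2 - 1 := by
    have : ((s:ℤ) + 1) = (t : ℤ) := by rw [hs]; push_cast; ring
    omega
  have hPl : (P n)^[t] (tau l) = (X : Polynomial ℚ) • tau (l.2 + l.2, 0) := by
    rw [hs, Function.iterate_succ_apply', claim1 s (by omega), P_tau]
    show pieriFun n (l.1 + s, l.2 + s) = _
    simp only [pieriFun]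
    rw [if_pos (by first | (dsimp only; omega) | omega), if_neg (by first | (dsimp only; omega) | omega)]
    have : l.2 + (s:ℤ) + 1 = l.2 + l.2 := by omega
    rw [this]
  have claim2 : ∀ k : ℕ, (k : ℤ) ≤ n - 2 → (P n)^[k] (tau (0, 0)) = tau ((k:ℤ), (k:ℤ)) := by
    intro k
    induction k with
    | zero => intro _; simp
    | succ k ih =>
      intro hk
      push_cast at hk
      have hk0 : (0:ℤ) ≤ (k:ℤ) := Int.natCast_nonneg k
      rw [Function.iterate_succ_apply', ih (by omega), P_tau]
      show pieriFun n ((k:ℤ), (k:ℤ)) = _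
      simp only [pieriFun]
      rw [if_neg (by first | (dsimp only; omega) | omega), if_neg (by first | (dsimp only; omega) | omega)]
      push_cast
      ring_nf
  have claim3 : ∀ (k : ℕ) (u v : M) (r : Polynomial ℚ),
      (P n)^[k] (u - r • v) = (P n)^[k] u - r • (P n)^[k] v := by
    intro k
    induction k with
    | zero => intros; simp
    | succ k ih =>
      intro u v r
      rw [Function.iterate_succ_apply', Function.iterate_succ_apply',
        Function.iterate_succ_apply', ih, map_sub, map_smul]
  have mem1 : ((l.2 + l.2 : ℤ), (0:ℤ)) ∈ LamF n := by rw [mem_LamF]; dsimp only; omega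
  have mem2 : ((l.2 : ℤ), (l.2 : ℤ)) ∈ LamF n := by rw [mem_LamF]; dsimp only; omega
  have key : (P n)^[t] (σ l) = (X : Polynomial ℚ) • σ (l.2 + l.2, 0) - (C a₀ * X) • σ (l.2, l.2) := by
    rw [hσl, claim3, hPl, claim2 t (by omega), ht,
      htau0 (l.2 + l.2, 0) mem1 (by first | (dsimp only; omega) | omega),
      htau0 (l.2, l.2) mem2 (by first | (dsimp only; omega) | omega)]
  -- positivity of iterated Pieri coefficients
  have claimB : ∀ k : ℕ, ∃ d : ℤ × ℤ → Polynomial ℚ,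
      (∀ ν ∈ LamF n, NN (d ν)) ∧ (P n)^[k] (σ l) = ∑ ν ∈ LamF n, d ν • σ ν := by
    intro k
    induction k with
    | zero =>
      refine ⟨fun ν => if ν = l then 1 else 0, ?_, ?_⟩
      · intro ν _
        by_cases hν : ν = l
        · simpa [hν] using NN_one
        · simpa [hν] using NN_zero
      · rw [Function.iterate_zero_apply]
        rw [Finset.sum_congr rfl (fun ν _ => by
          split_ifs with hν
          · exact one_smul _ _
          · exact zero_smul _ _ :
          ∀ ν ∈ LamF n, (if ν = l then (1:Polynomial ℚ) else 0) • σ ν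
            = if ν = l then σ ν else 0)]
        rw [Finset.sum_ite_eq' (LamF n) l σ, if_pos hl]
    | succ k ih =>
      obtain ⟨d, hd, heq⟩ := ih
      refine ⟨fun ρ => ∑ ν ∈ LamF n, d ν * c ν ρ, ?_, ?_⟩
      · intro ρ hρ
        exact NN_sum _ _ fun ν hν => NN_mul (hd ν hν) (fun k => hpos ν hν ρ hρ k)
      · rw [Function.iterate_succ_apply', heq, map_sum]
        rw [Finset.sum_congr rfl (fun ν hν => by
          rw [map_smul, hc ν hν, Finset.smul_sum] :
          ∀ ν ∈ LamF n, P n (d ν • σ ν) = ∑ ρ ∈ LamF n, d ν • (c ν ρ • σ ρ))]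
        simp_rw [smul_smul]
        rw [Finset.sum_comm]
        exact Finset.sum_congr rfl fun ρ _ => (Finset.sum_smul).symm
  obtain ⟨d, hd, heq⟩ := claimB t
  -- comparison function
  set e : ℤ × ℤ → Polynomial ℚ := fun ν =>
    (if ν = ((l.2 + l.2 : ℤ), (0:ℤ)) then X else 0) +
    (if ν = ((l.2 : ℤ), (l.2 : ℤ)) then C (-a₀) * X else 0) with hedef
  have hesum : ∑ ν ∈ LamF n, e ν • σ ν
      = (X : Polynomial ℚ) • σ (l.2 + l.2, 0) - (C a₀ * X) • σ (l.2, l.2) := by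
    simp only [hedef, add_smul]
    rw [Finset.sum_add_distrib]
    rw [Finset.sum_congr rfl (fun ν _ => by
      split_ifs with hν
      · rfl
      · exact zero_smul _ _ :
      ∀ ν ∈ LamF n, (if ν = ((l.2 + l.2 : ℤ), (0:ℤ)) then (X:Polynomial ℚ) else 0) • σ ν
        = if ν = ((l.2 + l.2 : ℤ), (0:ℤ)) then X • σ ν else 0)]
    rw [Finset.sum_congr rfl (fun ν _ => by
      split_ifs with hν
      · rfl
      · exact zero_smul _ _ :
      ∀ ν ∈ LamF n, (if ν = ((l.2 : ℤ), (l.2 : ℤ)) then C (-a₀) * X else 0) • σ ν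
        = if ν = ((l.2 : ℤ), (l.2 : ℤ)) then (C (-a₀) * X) • σ ν else 0)]
    rw [Finset.sum_ite_eq' (LamF n), Finset.sum_ite_eq' (LamF n), if_pos mem1, if_pos mem2]
    rw [map_neg, neg_mul, neg_smul]
    ring_nf
    abel
  have hde : ∀ ν ∈ LamF n, d ν = e ν :=
    lin_ext n σ hσ d e (by rw [← heq, key, hesum])
  have hdtt : d ((l.2 : ℤ), (l.2 : ℤ)) = C (-a₀) * X := by
    rw [hde _ mem2]
    simp only [hedef]
    rw [if_neg (by intro hc'; have := congrArg Prod.snd hc'; dsimp at this; omega)]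
    simp
  have := hd _ mem2 1
  rw [hdtt] at this
  simp only [Polynomial.coeff_C_mul, Polynomial.coeff_X_one, mul_one] at this
  linarith
end
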